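/- Let S_E be a schema containing the distinguished binary relation eq. For every S_E-instance I and every g ≥ 0, there exists an S_E-instance I^g whose girth exceeds g such that for every CSP template T over S_E that has equality, I^g homomorphically maps to T if and only if I homomorphically maps to T. -/

import Mathlib

namespace DDLogPaper

/-! ### Basic objects: constants, facts, schemas, instances, homomorphisms -/

/-- The fixed countably infinite set of constants. -/
abbrev Const := ℕ
/-- Variables. -/
abbrev Var := ℕ
/-- Relation symbols. -/
abbrev RelSym := ℕ

/-- A fact: a relation symbol applied to a tuple of constants. -/
structure Fact where
  rel : RelSym
  args : List Const
deriving DecidableEq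

/-- A schema: a finite set of relation symbols, each with an arity. -/
structure Schema where
  rels : Finset RelSym
  arity : RelSym → ℕ

/-- An instance is a finite set of facts. -/
abbrev Inst := Finset Fact

/-- `I` is an instance over schema `S`. -/
def Schema.IsInstance (S : Schema) (I : Inst) : Prop :=
  ∀ f ∈ I, f.rel ∈ S.rels ∧ f.args.length = S.arity f.rel

/-- The active domain of an instance. -/
def adom (I : Inst) : Finset Const :=
  I.biUnion (fun f => f.args.toFinset)

/-- `h` is a homomorphism from `I` to `J`. -/
def IsHom (h : Const → Const) (I J : Inst) : Prop :=
  ∀ f ∈ I, (⟨f.rel, f.args.map h⟩ : Fact) ∈ J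

/-- There is a homomorphism from `I` to `J`. -/
def HomTo (I J : Inst) : Prop := ∃ h, IsHom h I J

/-! ### Girth -/

/-- `I` has a cycle of length `n`: distinct facts `f 0, …, f (n-1)` with positions
`p i ≠ p' i` such that the constant of `f i` at position `p' i` equals the constant of
`f (i+1 mod n)` at position `p (i+1 mod n)`. -/
def HasCycleOfLength (I : Inst) (n : ℕ) : Prop :=
  0 < n ∧
  ∃ (f : ℕ → Fact) (p p' : ℕ → ℕ),
    (∀ i < n, f i ∈ I) ∧
    (∀ i j, i < n → j < n → f i = f j → i = j) ∧
    (∀ i < n, p i ≠ p' i ∧ p i < (f i).args.length ∧ p' i < (f i).args.length) ∧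
    (∀ i < n, (f i).args.getD (p' i) 0 = (f ((i + 1) % n)).args.getD (p ((i + 1) % n)) 0)

/-- The girth of `I` exceeds `g` (in particular this holds if `I` has no cycle at all). -/
def GirthGT (I : Inst) (g : ℕ) : Prop :=
  ∀ n ≤ g, ¬ HasCycleOfLength I n

/-! ### Tree decompositions -/

/-- `I` has a tree decomposition with bags of size at most `k`, overlap of distinct bags of
size at most `ℓ`, and such that every bag contains all elements of `params`. -/
def HasTreeDecompWithParams (I : Inst) (params : Finset Const) (ℓ k : ℕ) : Prop :=
  ∃ (V : Type) (T : SimpleGraph V) (B : V → Finset Const),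
    T.IsTree ∧
    (∀ v, B v ⊆ adom I ∪ params) ∧
    (∀ a ∈ adom I, (T.induce {v | a ∈ B v}).Connected) ∧
    (∀ f ∈ I, ∃ v, ∀ c ∈ f.args, c ∈ B v) ∧
    (∀ v, params ⊆ B v) ∧
    (∀ v w, v ≠ w → (B v ∩ B w).card ≤ ℓ) ∧
    (∀ v, (B v).card ≤ k)

/-- `I` has treewidth `(ℓ,k)`: it admits an `(ℓ,k)`-tree decomposition. -/
def HasTreeDecomp (I : Inst) (ℓ k : ℕ) : Prop :=
  HasTreeDecompWithParams I ∅ ℓ k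

/-! ### Terms, atoms, rules, programs -/

/-- A term is a variable or a constant. -/
inductive Term where
  | var : Var → Term
  | const : Const → Term
deriving DecidableEq

def Term.eval (v : Var → Const) : Term → Const
  | .var x => v x
  | .const c => c

def Term.varSet : Term → Finset Var
  | .var x => {x}
  | .const _ => ∅

/-- An atom: a relation symbol applied to a tuple of terms. -/
structure Atom where
  rel : RelSym
  args : List Term
deriving DecidableEq

/-- Apply a valuation to an atom, obtaining a fact. -/
def Atom.app (a : Atom) (v : Var → Const) : Fact :=
  ⟨a.rel, a.args.map (Term.eval v)⟩

def Atom.vars (a : Atom) : Finset Var :=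
  a.args.foldr (fun t s => t.varSet ∪ s) ∅

/-- The atom mentions no constants. -/
def Atom.constFree (a : Atom) : Prop :=
  ∀ t ∈ a.args, ∃ x, t = Term.var x

def Atom.size (a : Atom) : ℕ := 1 + a.args.length

/-- The number of variable occurrences in an atom. -/
def Atom.varOccs (a : Atom) : ℕ :=
  (a.args.filter (fun t => match t with | Term.var _ => true | Term.const _ => false)).length

/-- A (disjunctive) rule: a disjunction of head atoms and a conjunction of body atoms. -/
structure Rule where
  head : List Atom
  body : List Atom
deriving DecidableEq

def Rule.atoms (ρ : Rule) : List Atom := ρ.head ++ ρ.body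

def Rule.vars (ρ : Rule) : Finset Var :=
  ρ.atoms.foldr (fun a s => a.vars ∪ s) ∅

def Rule.bodyVars (ρ : Rule) : Finset Var :=
  ρ.body.foldr (fun a s => a.vars ∪ s) ∅

/-- The rule holds in a set of facts `J` (all variables universally quantified). -/
def Rule.holdsIn (ρ : Rule) (J : Set Fact) : Prop :=
  ∀ v : Var → Const, (∀ a ∈ ρ.body, a.app v ∈ J) → ∃ a ∈ ρ.head, a.app v ∈ J

def Rule.size (ρ : Rule) : ℕ := 1 + (ρ.atoms.map Atom.size).sum

def Rule.bodyVarOccs (ρ : Rule) : ℕ := (ρ.body.map Atom.varOccs).sum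

/-- A disjunctive Datalog program: a finite set of rules together with a selected goal
relation and its arity. -/
structure Program where
  rules : Finset Rule
  goal : RelSym
  goalArity : ℕ

/-- `P.models I t` formalizes `P ∪ I ⊨ goal(t)` (first-order entailment; by Herbrand's
theorem for universal sentences it suffices to quantify over all sets of facts). -/
def Program.models (P : Program) (I : Inst) (t : List Const) : Prop :=
  ∀ J : Set Fact, (I : Set Fact) ⊆ J → (∀ ρ ∈ P.rules, ρ.holdsIn J) →
    (⟨P.goal, t⟩ : Fact) ∈ J

/-- The IDB relations of a program: the relations occurring in some rule head, together
with the goal relation. -/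
def Program.IDB (P : Program) : Finset RelSym :=
  insert P.goal (P.rules.biUnion (fun ρ => (ρ.head.map Atom.rel).toFinset))

/-- `P` is a well-formed disjunctive Datalog program over EDB schema `S`. -/
def Program.IsDDLog (P : Program) (S : Schema) : Prop :=
  (∀ r ∈ P.IDB, r ∉ S.rels) ∧
  ∀ ρ ∈ P.rules,
    ρ.body ≠ [] ∧
    (∀ a ∈ ρ.head, a.vars ⊆ ρ.bodyVars) ∧
    (∀ a ∈ ρ.body, a.rel ≠ P.goal) ∧
    ((∃ a ∈ ρ.head, a.rel = P.goal) → ρ.head.length = 1) ∧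
    (∀ a ∈ ρ.atoms, a.rel = P.goal → a.args.length = P.goalArity) ∧
    (∀ a ∈ ρ.atoms, a.rel ∉ P.IDB → a.rel ∈ S.rels ∧ a.args.length = S.arity a.rel)

/-- Monadic disjunctive Datalog: all IDB relations except possibly goal have arity ≤ 1. -/
def Program.IsMDDLog (P : Program) (S : Schema) : Prop :=
  P.IsDDLog S ∧
  ∀ ρ ∈ P.rules, ∀ a ∈ ρ.atoms, a.rel ∈ P.IDB → a.rel ≠ P.goal → a.args.length ≤ 1

/-- Datalog: every rule head consists of exactly one atom. -/
def Program.IsDatalog (P : Program) (S : Schema) : Prop :=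
  P.IsDDLog S ∧ ∀ ρ ∈ P.rules, ρ.head.length = 1

/-- Monadic Datalog. -/
def Program.IsMDLog (P : Program) (S : Schema) : Prop :=
  P.IsDatalog S ∧
  ∀ ρ ∈ P.rules, ∀ a ∈ ρ.atoms, a.rel ∈ P.IDB → a.rel ≠ P.goal → a.args.length ≤ 1

/-- The program mentions no constants. -/
def Program.constFree (P : Program) : Prop :=
  ∀ ρ ∈ P.rules, ∀ a ∈ ρ.atoms, a.constFree

/-- The size of a program (number of symbols needed to write it). -/
def Program.size (P : Program) : ℕ := ∑ ρ ∈ P.rules, ρ.size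

/-- The diameter: the maximum number of variables occurring in a rule. -/
def Program.diameter (P : Program) : ℕ := P.rules.sup (fun ρ => ρ.vars.card)

/-- The rule size: the maximum number of variable occurrences in a rule body. -/
def Program.ruleSize (P : Program) : ℕ := P.rules.sup Rule.bodyVarOccs

def Atom.widthContrib (P : Program) (a : Atom) : ℕ :=
  if a.rel ∈ P.IDB ∧ a.rel ≠ P.goal then a.args.length else 0

/-- The width: the maximum arity of non-goal IDB relations used in the program. -/
def Program.width (P : Program) : ℕ :=
  P.rules.sup (fun ρ => (ρ.atoms.map (Atom.widthContrib P)).foldr max 0)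

/-- A simple MDDLog program: each rule has at most one EDB atom, which contains all
variables of the rule body, each exactly once; rules without an EDB atom have at most
one variable. -/
def Program.IsSimple (P : Program) : Prop :=
  ∀ ρ ∈ P.rules,
    (∀ a ∈ ρ.body, ∀ b ∈ ρ.body, a.rel ∉ P.IDB → b.rel ∉ P.IDB → a = b) ∧
    (∀ a ∈ ρ.body, a.rel ∉ P.IDB →
      ∃ xs : List Var, a.args = xs.map Term.var ∧ xs.Nodup ∧ xs.toFinset = ρ.bodyVars) ∧
    ((∀ a ∈ ρ.body, a.rel ∈ P.IDB) → ρ.bodyVars.card ≤ 1)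

/-! ### Datalog with parameters -/

/-- An `(ℓ,k)`-Datalog program with `n` parameters: an `n`-ary `(ℓ+n,k+n)`-Datalog program
in which all IDB relations have arity at least `n` and in every rule all IDB atoms
(including goal atoms) agree on the terms in their last `n` positions. -/
def Program.IsParamDatalog (Γ : Program) (S : Schema) (ℓ k n : ℕ) : Prop :=
  Γ.IsDatalog S ∧ Γ.goalArity = n ∧
  Γ.width ≤ ℓ + n ∧ Γ.diameter ≤ k + n ∧
  (∀ ρ ∈ Γ.rules, ∀ a ∈ ρ.atoms, a.rel ∈ Γ.IDB → n ≤ a.args.length) ∧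
  (∀ ρ ∈ Γ.rules, ∃ ys : List Term,
    ∀ a ∈ ρ.atoms, a.rel ∈ Γ.IDB → a.args.drop (a.args.length - n) = ys)

/-! ### Conjunctive queries and unions of conjunctive queries -/

/-- A conjunctive query: answer variables, relational atoms, and equality atoms. -/
structure CQ where
  answers : List Var
  atoms : List Atom
  eqs : List (Var × Var)

/-- The CQ only uses relations from schema `S` (with correct arities) and no constants. -/
def CQ.over (q : CQ) (S : Schema) : Prop :=
  ∀ a ∈ q.atoms, a.rel ∈ S.rels ∧ a.args.length = S.arity a.rel ∧ a.constFree

/-- `t` is an answer to the CQ `q` on `I`. -/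
def CQ.holds (q : CQ) (I : Inst) (t : List Const) : Prop :=
  ∃ h : Var → Const,
    (∀ a ∈ q.atoms, a.app h ∈ I) ∧
    (∀ e ∈ q.eqs, h e.1 = h e.2) ∧
    q.answers.map h = t

/-- A union of conjunctive queries is a finite list of CQs. -/
abbrev UCQ := List CQ

def UCQHolds (u : UCQ) (I : Inst) (t : List Const) : Prop :=
  ∃ q ∈ u, q.holds I t

def UCQOver (u : UCQ) (S : Schema) (n : ℕ) : Prop :=
  ∀ q ∈ u, q.over S ∧ q.answers.length = n

def Term.toConst : Term → Const
  | .var x => x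
  | .const c => c

/-- A CQ viewed as an instance (variables as constants). -/
def CQ.toInst (q : CQ) : Inst :=
  (q.atoms.map (fun a => (⟨a.rel, a.args.map Term.toConst⟩ : Fact))).toFinset

/-! ### First-order queries -/

/-- First-order formulas over a relational vocabulary, possibly with equality,
without constants and function symbols. -/
inductive FO where
  | rel : RelSym → List Var → FO
  | eq : Var → Var → FO
  | neg : FO → FO
  | conj : FO → FO → FO
  | disj : FO → FO → FO
  | ex : Var → FO → FO
  | all : Var → FO → FO

/-- Evaluation of a first-order formula in an instance (active-domain quantification). -/
def FO.eval (I : Inst) : FO → (Var → Const) → Prop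
  | .rel r xs, v => (⟨r, xs.map v⟩ : Fact) ∈ I
  | .eq x y, v => v x = v y
  | .neg φ, v => ¬ FO.eval I φ v
  | .conj φ ψ, v => FO.eval I φ v ∧ FO.eval I ψ v
  | .disj φ ψ, v => FO.eval I φ v ∨ FO.eval I ψ v
  | .ex x φ, v => ∃ c ∈ adom I, FO.eval I φ (Function.update v x c)
  | .all x φ, v => ∀ c ∈ adom I, FO.eval I φ (Function.update v x c)

/-- The formula only uses relation symbols from `S`, with correct arities. -/
def FO.over (S : Schema) : FO → Prop
  | .rel r xs => r ∈ S.rels ∧ xs.length = S.arity r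
  | .eq _ _ => True
  | .neg φ => FO.over S φ
  | .conj φ ψ => FO.over S φ ∧ FO.over S ψ
  | .disj φ ψ => FO.over S φ ∧ FO.over S ψ
  | .ex _ φ => FO.over S φ
  | .all _ φ => FO.over S φ

/-- Free variables of a first-order formula. -/
def FO.free : FO → Finset Var
  | .rel _ xs => xs.toFinset
  | .eq x y => {x, y}
  | .neg φ => φ.free
  | .conj φ ψ => φ.free ∪ ψ.free
  | .disj φ ψ => φ.free ∪ ψ.free
  | .ex x φ => φ.free.erase x
  | .all x φ => φ.free.erase x

/-! ### Rewritings -/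

/-- `φ` is an FO-rewriting of the (n-ary) program `P` over `S`
(answer variables are `0, …, n-1`). -/
def FOIsRewritingOf (φ : FO) (S : Schema) (P : Program) : Prop :=
  FO.over S φ ∧ φ.free ⊆ Finset.range P.goalArity ∧
  ∀ I : Inst, S.IsInstance I → ∀ t : List Const, t.length = P.goalArity →
    (∀ c ∈ t, c ∈ adom I) → (FO.eval I φ (fun i => t.getD i 0) ↔ P.models I t)

/-- `u` is a UCQ-rewriting of the program `P` over `S`. -/
def UCQIsRewritingOf (u : UCQ) (S : Schema) (P : Program) : Prop :=
  UCQOver u S P.goalArity ∧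
  ∀ I : Inst, S.IsInstance I → ∀ t : List Const, t.length = P.goalArity →
    (∀ c ∈ t, c ∈ adom I) → (UCQHolds u I t ↔ P.models I t)

/-- The program `Γ` is a rewriting of the program `P` over `S`. -/
def Program.IsRewritingOf (Γ : Program) (S : Schema) (P : Program) : Prop :=
  Γ.goalArity = P.goalArity ∧
  ∀ I : Inst, S.IsInstance I → ∀ t : List Const, t.length = P.goalArity →
    (∀ c ∈ t, c ∈ adom I) → (Γ.models I t ↔ P.models I t)

/-- The program `Γ` is sound for the program `P` over `S`. -/
def Program.SoundFor (Γ : Program) (S : Schema) (P : Program) : Prop :=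
  ∀ I : Inst, S.IsInstance I → ∀ t : List Const, t.length = P.goalArity →
    (∀ c ∈ t, c ∈ adom I) → Γ.models I t → P.models I t

/-! ### Boolean queries, CSPs -/

/-- The complement of the generalized CSP given by the set of templates `S`, as a
Boolean query: true on `I` iff `I` maps homomorphically to no template in `S`. -/
def coCSP (S : Finset Inst) : Inst → Prop := fun I => ∀ T ∈ S, ¬ HomTo I T

/-- `φ` is an FO-definition (rewriting) of the Boolean query `Q` over `S`. -/
def IsFODefOf (φ : FO) (S : Schema) (Q : Inst → Prop) : Prop :=
  FO.over S φ ∧ φ.free = ∅ ∧ ∀ I : Inst, S.IsInstance I → (FO.eval I φ (fun _ => 0) ↔ Q I)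

/-- `u` is a UCQ-definition (rewriting) of the Boolean query `Q` over `S`. -/
def IsUCQDefOf (u : UCQ) (S : Schema) (Q : Inst → Prop) : Prop :=
  UCQOver u S 0 ∧ ∀ I : Inst, S.IsInstance I → (UCQHolds u I [] ↔ Q I)

/-- `Γ` is an MDLog-definition (rewriting) of the Boolean query `Q` over `S`. -/
def IsMDLogDefOf (Γ : Program) (S : Schema) (Q : Inst → Prop) : Prop :=
  Γ.IsMDLog S ∧ Γ.constFree ∧ Γ.goalArity = 0 ∧
  ∀ I : Inst, S.IsInstance I → (Γ.models I [] ↔ Q I)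

/-- `Γ` is a Datalog-definition (rewriting) of the Boolean query `Q` over `S`. -/
def IsDLogDefOf (Γ : Program) (S : Schema) (Q : Inst → Prop) : Prop :=
  Γ.IsDatalog S ∧ Γ.constFree ∧ Γ.goalArity = 0 ∧
  ∀ I : Inst, S.IsInstance I → (Γ.models I [] ↔ Q I)

/-! ### Aggregation schemas -/

/-- A `k`-aggregation schema for `SE`: every relation `R` is of the form `R_{q(x̄)}` for a
quantifier-free CQ `q(x̄)` over `SE` with at most `k` answer variables, the arity of `R`
being the number of answer variables of `q(x̄)`. -/
structure Aggregation (SE : Schema) (k : ℕ) where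
  S : Schema
  q : RelSym → CQ
  wf : ∀ R ∈ S.rels,
    (q R).over SE ∧
    (q R).eqs = [] ∧
    (q R).answers.Nodup ∧
    (q R).answers.length = S.arity R ∧
    (q R).answers.length ≤ k ∧
    (∀ a ∈ (q R).atoms, a.vars ⊆ (q R).answers.toFinset)

/-- `I'` is the `S'`-instance corresponding to the `SE`-instance `I`: it consists of all
facts `R_{q(x̄)}(ā)` with `I ⊨ q(ā)`. -/
def CorrUp {SE : Schema} {k : ℕ} (A : Aggregation SE k) (I I' : Inst) : Prop :=
  ∀ f : Fact, f ∈ I' ↔ (f.rel ∈ A.S.rels ∧ (A.q f.rel).holds I f.args)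

/-- `I` is the `SE`-instance corresponding to the `S'`-instance `I'`: it consists of all
facts that occur as a conjunct of `q(ā)` for some fact `R_{q(x̄)}(ā) ∈ I'`. -/
def CorrDown {SE : Schema} {k : ℕ} (A : Aggregation SE k) (I' I : Inst) : Prop :=
  ∀ g : Fact, g ∈ I ↔
    ∃ f ∈ I', ∃ h : Var → Const,
      (A.q f.rel).answers.map h = f.args ∧ ∃ a ∈ (A.q f.rel).atoms, Atom.app a h = g

/-! ### Equality -/

/-- The distinguished binary relation symbol `eq`. -/
def eqRel : RelSym := 0

/-- The schema contains the distinguished binary relation `eq`. -/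
def HasEqualitySchema (S : Schema) : Prop := eqRel ∈ S.rels ∧ S.arity eqRel = 2

/-- A template has equality: it interprets `eq` as `{(a,a) | a ∈ adom T}`. -/
def TemplateHasEquality (T : Inst) : Prop :=
  ∀ a b : Const, ((⟨eqRel, [a, b]⟩ : Fact) ∈ T ↔ (a = b ∧ a ∈ adom T))

def eqRuleFwd (R : RelSym) : Rule :=
  ⟨[⟨R, [Term.var 1]⟩], [⟨R, [Term.var 0]⟩, ⟨eqRel, [Term.var 0, Term.var 1]⟩]⟩

def eqRuleBwd (R : RelSym) : Rule :=
  ⟨[⟨R, [Term.var 0]⟩], [⟨R, [Term.var 1]⟩, ⟨eqRel, [Term.var 0, Term.var 1]⟩]⟩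

/-- The extension `P^=` of `P` with the fresh EDB relation `eq` and the rules
`P(x) ∧ eq(x,y) → P(y)` and `P(y) ∧ eq(x,y) → P(x)` for each IDB relation `P`. -/
def Program.withEq (P : Program) : Program :=
  ⟨P.rules ∪ (P.IDB.erase P.goal).biUnion (fun R => {eqRuleFwd R, eqRuleBwd R}),
   P.goal, P.goalArity⟩

/-! ### (1,k)-decompositions and decomposition girth -/

def partInst (I : Inst) (part : Fact → ℕ) (v : ℕ) : Inst :=
  I.filter (fun f => part f = v)

/-- `part` induces a `(1,k)`-decomposition of `I`: parts have active domains of size at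
most `k`, distinct parts overlap in at most one constant. -/
def IsDecompOf (I : Inst) (part : Fact → ℕ) (k : ℕ) : Prop :=
  (∀ v ∈ I.image part, (adom (partInst I part v)).card ≤ k) ∧
  (∀ v w, v ∈ I.image part → w ∈ I.image part → v ≠ w →
    ((adom (partInst I part v)) ∩ (adom (partInst I part w))).card ≤ 1)

/-- The instance over an aggregation schema induced by a decomposition: one fact per part,
whose arguments enumerate the active domain of the part (in a fixed order). -/
def decompInst (I : Inst) (part : Fact → ℕ) : Inst :=
  (I.image part).image
    (fun v => (⟨v, (adom (partInst I part v)).sort (· ≤ ·)⟩ : Fact))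

/-- The `(1,k)`-decomposition girth of `I` exceeds `g`: some `(1,k)`-decomposition `D` of
`I` is such that the girth of `I_D` exceeds `g`. -/
def DecompGirthGT (I : Inst) (k g : ℕ) : Prop :=
  ∃ part : Fact → ℕ, IsDecompOf I part k ∧ GirthGT (decompInst I part) g

/-! ### MMSNP -/

/-- An atom `X_i(x_j)` built from a monadic second-order variable. -/
structure SOAtom where
  pred : ℕ
  var : Var
deriving DecidableEq

/-- An implication `β₁ ∨ ⋯ ∨ βₙ ← α₁ ∧ ⋯ ∧ αₘ` of an MMSNP formula: the `β`s are
second-order atoms, the `α`s are second-order atoms or EDB atoms. -/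
structure MMSNPImpl where
  headDisjuncts : List SOAtom
  bodySO : List SOAtom
  bodyEDB : List Fact
deriving DecidableEq

/-- An MMSNP formula `∃X₁⋯∃Xp ∀x₁⋯∀xm φ` with `freeVarCount` free first-order variables
(the variables `0, …, freeVarCount - 1`). -/
structure MMSNP where
  freeVarCount : ℕ
  impls : List MMSNPImpl

def MMSNPOver (θ : MMSNP) (S : Schema) : Prop :=
  ∀ c ∈ θ.impls, ∀ f ∈ c.bodyEDB, f.rel ∈ S.rels ∧ f.args.length = S.arity f.rel

def MMSNPImpl.vars (c : MMSNPImpl) : Finset Var :=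
  (c.headDisjuncts.map SOAtom.var).toFinset ∪ (c.bodySO.map SOAtom.var).toFinset ∪
    c.bodyEDB.foldr (fun f s => f.args.toFinset ∪ s) ∅

/-- The diameter of an MMSNP formula: the maximum number of variables in an implication. -/
def MMSNP.diameter (θ : MMSNP) : ℕ :=
  (θ.impls.map (fun c => c.vars.card)).foldr max 0

/-- `I ⊨ θ[t]`: satisfaction of an MMSNP formula in an instance, with the free variables
`0, …, freeVarCount-1` interpreted by the tuple `t`. -/
def MMSNPSat (θ : MMSNP) (I : Inst) (t : List Const) : Prop :=
  ∃ X : ℕ → Set Const,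
    ∀ v : Var → Const, (∀ x, v x ∈ adom I) → (∀ i < θ.freeVarCount, v i = t.getD i 0) →
      ∀ c ∈ θ.impls,
        ((∀ a ∈ c.bodySO, v a.var ∈ X a.pred) ∧
         (∀ f ∈ c.bodyEDB, (⟨f.rel, f.args.map v⟩ : Fact) ∈ I)) →
        ∃ a ∈ c.headDisjuncts, v a.var ∈ X a.pred

end DDLogPaper

open DDLogPaper

/-!
Replace every occurrence of a constant `a` of `I` by a fresh constant and join all fresh copies of
`a` by one path of `eq`-facts. A homomorphism into a template with equality maps every `eq`-fact
to a loop, so it is constant along each path, and homomorphisms from the new instance correspond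
to homomorphisms from `I`. The copies sit on their path at indices divisible by `g + 1`, and copied
facts share no constants, so a cycle through a copied fact walks along a path from one copy to a
different one, which takes at least `g + 1` `eq`-facts; a cycle of `eq`-facts alone cannot exist
because the paths are trees.
-/

namespace DDLogPaper

open Encodable

instance : Encodable Fact :=
  Encodable.ofEquiv (RelSym × List Const)
    ⟨fun F => (F.rel, F.args), fun p => ⟨p.1, p.2⟩, fun _ => rfl, fun _ => rfl⟩

/-- The `t`-th edge of the `eq`-path of `a`, whose vertices are the constants `Nat.pair a s`. -/
def pathFact (a t : Const) : Fact := ⟨eqRel, [Nat.pair a t, Nat.pair a (t + 1)]⟩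

def copyFact (g : ℕ) (F : Fact) : Fact :=
  ⟨F.rel, F.args.mapIdx fun i a => Nat.pair a ((g + 1) * encode (F, i))⟩

def codeBound (I : Inst) : ℕ :=
  I.sup fun F => (Finset.range F.args.length).sup fun i => encode (F, i)

def highGirthInst (I : Inst) (g : ℕ) : Inst :=
  I.image (copyFact g) ∪
    (adom I ×ˢ Finset.range ((g + 1) * codeBound I)).image fun p => pathFact p.1 p.2

lemma encode_le_codeBound {I : Inst} {F : Fact} (hF : F ∈ I) {i : ℕ} (hi : i < F.args.length) :
    encode (F, i) ≤ codeBound I :=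
  (Finset.le_sup (f := fun i => encode (F, i)) (Finset.mem_range.2 hi)).trans
    (Finset.le_sup (f := fun F => (Finset.range F.args.length).sup fun i => encode (F, i)) hF)

lemma mem_adom_of_mem_args {I : Inst} {F : Fact} (hF : F ∈ I) {a : Const} (ha : a ∈ F.args) :
    a ∈ adom I :=
  Finset.mem_biUnion.2 ⟨F, hF, List.mem_toFinset.2 ha⟩

lemma mem_highGirthInst {I : Inst} {g : ℕ} {f : Fact} :
    f ∈ highGirthInst I g ↔
      (∃ F ∈ I, copyFact g F = f) ∨
        ∃ a ∈ adom I, ∃ t < (g + 1) * codeBound I, pathFact a t = f := by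
  simp [highGirthInst, and_assoc]

lemma isInstance_highGirthInst {S : Schema} (hS : HasEqualitySchema S) {I : Inst}
    (hI : S.IsInstance I) (g : ℕ) : S.IsInstance (highGirthInst I g) := by
  intro f hf
  rcases mem_highGirthInst.1 hf with ⟨F, hF, rfl⟩ | ⟨a, -, t, -, rfl⟩
  · simpa [copyFact] using hI F hF
  · exact ⟨hS.1, by simp [pathFact, hS.2]⟩

section Homomorphisms

lemma IsHom.mem_adom {h : Const → Const} {I J : Inst} (hh : IsHom h I J) {a : Const}
    (ha : a ∈ adom I) : h a ∈ adom J := by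
  obtain ⟨F, hF, haF⟩ := Finset.mem_biUnion.1 ha
  exact mem_adom_of_mem_args (hh F hF) (List.mem_map_of_mem (List.mem_toFinset.1 haF))

lemma map_copyFact_args {g : ℕ} {F : Fact} {φ ψ : Const → Const}
    (h : ∀ i (hi : i < F.args.length),
      φ (Nat.pair F.args[i] ((g + 1) * encode (F, i))) = ψ F.args[i]) :
    (copyFact g F).args.map φ = F.args.map ψ := by
  refine List.ext_getElem (by simp [copyFact]) fun i h₁ h₂ => ?_
  simp only [copyFact, List.getElem_map, List.getElem_mapIdx]
  exact h i _

lemma homTo_highGirthInst {I T : Inst} (hT : TemplateHasEquality T) (g : ℕ) (hIT : HomTo I T) :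
    HomTo (highGirthInst I g) T := by
  obtain ⟨h, hh⟩ := hIT
  refine ⟨fun x => h x.unpair.1, fun f hf => ?_⟩
  rcases mem_highGirthInst.1 hf with ⟨F, hF, rfl⟩ | ⟨a, ha, t, -, rfl⟩
  · rw [map_copyFact_args (ψ := h) fun i hi => by simp]
    exact hh F hF
  · simpa [pathFact] using (hT (h a) (h a)).2 ⟨rfl, hh.mem_adom ha⟩

lemma IsHom.map_pair_eq {I T : Inst} {g : ℕ} {h : Const → Const}
    (hh : IsHom h (highGirthInst I g) T) (hT : TemplateHasEquality T) {a : Const}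
    (ha : a ∈ adom I) : ∀ s ≤ (g + 1) * codeBound I, h (Nat.pair a s) = h (Nat.pair a 0)
  | 0, _ => rfl
  | s + 1, hs => by
    have hmem := hh (pathFact a s) (mem_highGirthInst.2 (.inr ⟨a, ha, s, hs, rfl⟩))
    rw [← hh.map_pair_eq hT ha s (by omega)]
    exact ((hT _ _).1 hmem).1.symm

lemma homTo_of_homTo_highGirthInst {I T : Inst} (hT : TemplateHasEquality T) (g : ℕ)
    (hIT : HomTo (highGirthInst I g) T) : HomTo I T := by
  obtain ⟨h, hh⟩ := hIT
  refine ⟨fun a => h (Nat.pair a 0), fun F hF => ?_⟩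
  have hmem := hh _ (mem_highGirthInst.2 (.inl ⟨F, hF, rfl⟩))
  rwa [map_copyFact_args (ψ := fun a => h (Nat.pair a 0)) fun i hi => hh.map_pair_eq hT
    (mem_adom_of_mem_args hF (List.getElem_mem hi)) _
    (Nat.mul_le_mul_left _ (encode_le_codeBound hF hi))] at hmem

end Homomorphisms

section Girth

lemma mem_copyFact_args {g : ℕ} {F : Fact} {x : Const} :
    x ∈ (copyFact g F).args ↔
      ∃ i, ∃ hi : i < F.args.length, Nat.pair F.args[i] ((g + 1) * encode (F, i)) = x :=
  List.mem_mapIdx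

lemma eq_of_mem_copyFact_args {g : ℕ} {F F' : Fact} {x : Const} (hx : x ∈ (copyFact g F).args)
    (hx' : x ∈ (copyFact g F').args) : F = F' := by
  obtain ⟨i, hi, rfl⟩ := mem_copyFact_args.1 hx
  obtain ⟨j, hj, h⟩ := mem_copyFact_args.1 hx'
  rw [Nat.pair_eq_pair] at h
  exact (Prod.mk.inj (encode_injective (Nat.eq_of_mul_eq_mul_left g.succ_pos h.2))).1.symm

lemma dvd_unpair_snd_of_mem_copyFact_args {g : ℕ} {F : Fact} {x : Const}
    (hx : x ∈ (copyFact g F).args) : g + 1 ∣ x.unpair.2 := by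
  obtain ⟨i, hi, rfl⟩ := mem_copyFact_args.1 hx
  simp

lemma nodup_copyFact_args (g : ℕ) (F : Fact) : (copyFact g F).args.Nodup := by
  rw [List.nodup_iff_injective_getElem]
  intro i j hij
  simp only [copyFact, List.getElem_mapIdx, Nat.pair_eq_pair] at hij
  exact Fin.ext (Prod.mk.inj (encode_injective (Nat.eq_of_mul_eq_mul_left g.succ_pos hij.2))).2

lemma nodup_args_of_mem_highGirthInst {I : Inst} {g : ℕ} {f : Fact}
    (hf : f ∈ highGirthInst I g) : f.args.Nodup := by
  rcases mem_highGirthInst.1 hf with ⟨F, -, rfl⟩ | ⟨a, -, t, -, rfl⟩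
  · exact nodup_copyFact_args g F
  · simp [pathFact]

lemma unpair_of_mem_pathFact_args {a t x y : Const} (hx : x ∈ (pathFact a t).args)
    (hy : y ∈ (pathFact a t).args) (hxy : x ≠ y) :
    (x.unpair = (a, t) ∧ y.unpair = (a, t + 1)) ∨ (x.unpair = (a, t + 1) ∧ y.unpair = (a, t)) := by
  simp only [pathFact, List.mem_cons, List.not_mem_nil, or_false] at hx hy
  rcases hx with rfl | rfl <;> rcases hy with rfl | rfl <;> simp_all

lemma eq_add_or_eq_add_of_nonbacktracking (s : ℕ → ℕ) (m : ℕ)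
    (hstep : ∀ i < m, s (i + 1) = s i + 1 ∨ s i = s (i + 1) + 1)
    (hback : ∀ i, i + 2 ≤ m → s (i + 2) ≠ s i) :
    s m = s 0 + m ∨ s 0 = s m + m := by
  suffices key : ∀ k, k + 1 ≤ m →
      (s (k + 1) = s 0 + (k + 1) ∧ s (k + 1) = s k + 1) ∨
        (s 0 = s (k + 1) + (k + 1) ∧ s k = s (k + 1) + 1) by
    rcases m with _ | k
    · simp
    · have := key k le_rfl
      omega
  intro k hk
  induction k with
  | zero => have h₀ := hstep 0 (by omega); omega
  | succ k ih =>
    have h₁ := ih (by omega)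
    have h₂ := hstep (k + 1) (by omega)
    have h₃ : s (k + 1 + 1) ≠ s k := hback k (by omega)
    omega

/-- A cycle of length `n` unrolled periodically: `x i` is the constant shared by `f i` and
`f (i + 1)`. -/
structure IsCyclicTrail (J : Inst) (n : ℕ) (f : ℕ → Fact) (x : ℕ → Const) : Prop where
  mem : ∀ i, f i ∈ J
  mem_left : ∀ i, x i ∈ (f i).args
  mem_right : ∀ i, x i ∈ (f (i + 1)).args
  ne_succ : ∀ i, x i ≠ x (i + 1)
  mod_eq_of_eq : ∀ i j, f i = f j → i % n = j % n
  fact_periodic : ∀ i, f (i + n) = f i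
  periodic : ∀ i, x (i + n) = x i

lemma HasCycleOfLength.exists_isCyclicTrail {J : Inst} {n : ℕ} (hJ : ∀ f ∈ J, f.args.Nodup)
    (h : HasCycleOfLength J n) : ∃ f x, IsCyclicTrail J n f x := by
  obtain ⟨hn, f, p, p', hmem, hinj, hpos, hshare⟩ := h
  have hmod : ∀ i, i % n < n := fun i => Nat.mod_lt i hn
  have hnext : ∀ i, (f (i % n)).args.getD (p' (i % n)) 0 =
      (f ((i + 1) % n)).args.getD (p ((i + 1) % n)) 0 := fun i => by
    rw [hshare _ (hmod i), Nat.mod_add_mod]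
  refine ⟨fun i => f (i % n), fun i => (f (i % n)).args.getD (p' (i % n)) 0,
    ⟨fun i => hmem _ (hmod i), fun i => ?_, fun i => ?_, fun i => ?_,
      fun i j h => hinj _ _ (hmod i) (hmod j) h, fun i => by simp, fun i => by simp⟩⟩
  · rw [List.getD_eq_getElem _ _ (hpos _ (hmod i)).2.2]
    exact List.getElem_mem _
  · rw [hnext, List.getD_eq_getElem _ _ (hpos _ (hmod (i + 1))).2.1]
    exact List.getElem_mem _
  · obtain ⟨hne, hp, hp'⟩ := hpos _ (hmod (i + 1))
    rw [hnext, List.getD_eq_getElem _ _ hp, List.getD_eq_getElem _ _ hp', Ne,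
      (hJ _ (hmem _ (hmod (i + 1)))).getElem_inj_iff]
    exact hne

namespace IsCyclicTrail

variable {J : Inst} {n : ℕ} {f : ℕ → Fact} {x : ℕ → Const}

lemma shift (h : IsCyclicTrail J n f x) (k : ℕ) :
    IsCyclicTrail J n (fun i => f (k + i)) (fun i => x (k + i)) where
  mem i := h.mem (k + i)
  mem_left i := h.mem_left (k + i)
  mem_right i := h.mem_right (k + i)
  ne_succ i := h.ne_succ (k + i)
  mod_eq_of_eq i j hij := Nat.ModEq.add_left_cancel' k (h.mod_eq_of_eq _ _ hij)
  fact_periodic i := by simpa only [← add_assoc] using h.fact_periodic (k + i)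
  periodic i := by simpa only [← add_assoc] using h.periodic (k + i)

lemma fact_ne_succ (h : IsCyclicTrail J n f x) (i : ℕ) : f i ≠ f (i + 1) := by
  intro hf
  have hmod : i + 0 ≡ i + 1 [MOD n] := h.mod_eq_of_eq _ _ hf
  have hn : n = 1 := Nat.dvd_one.1 (Nat.modEq_zero_iff_dvd.1 (hmod.add_left_cancel' i).symm)
  subst hn
  exact h.ne_succ i (h.periodic i).symm

lemma eq_add_or_eq_add_of_pathFact (h : IsCyclicTrail J n f x) {m : ℕ}
    (hpath : ∀ j, 0 < j → j ≤ m → ∃ a t, f j = pathFact a t) :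
    (x m).unpair.2 = (x 0).unpair.2 + m ∨ (x 0).unpair.2 = (x m).unpair.2 + m := by
  have hstep : ∀ i < m, ∃ a t, (((x i).unpair = (a, t) ∧ (x (i + 1)).unpair = (a, t + 1)) ∨
      ((x i).unpair = (a, t + 1) ∧ (x (i + 1)).unpair = (a, t))) ∧ f (i + 1) = pathFact a t := by
    intro i hi
    obtain ⟨a, t, hf⟩ := hpath (i + 1) (by omega) hi
    have hx := h.mem_right i
    have hx' := h.mem_left (i + 1)
    rw [hf] at hx hx'
    exact ⟨a, t, unpair_of_mem_pathFact_args hx hx' (h.ne_succ i), hf⟩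
  apply eq_add_or_eq_add_of_nonbacktracking (fun i => (x i).unpair.2) m
  · intro i hi
    obtain ⟨a, t, hu, -⟩ := hstep i hi
    rcases hu with ⟨h₁, h₂⟩ | ⟨h₁, h₂⟩ <;> simp [h₁, h₂]
  · intro i hi hback
    replace hback : (x (i + 1 + 1)).unpair.2 = (x i).unpair.2 := hback
    obtain ⟨a, t, hu, hf⟩ := hstep i (by omega)
    obtain ⟨a', t', hu', hf'⟩ := hstep (i + 1) (by omega)
    have hsame : a = a' ∧ t = t' := by
      simp only [Prod.ext_iff] at hu hu' hback
      omega
    apply h.fact_ne_succ (i + 1)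
    rw [hf, hf', hsame.1, hsame.2]

end IsCyclicTrail

lemma IsCyclicTrail.false_of_copyFact {I : Inst} {g n : ℕ} {f : ℕ → Fact} {x : ℕ → Const}
    (h : IsCyclicTrail (highGirthInst I g) n f x) (hn : 0 < n) (hng : n ≤ g)
    (h0 : ∃ F ∈ I, f 0 = copyFact g F) : False := by
  obtain ⟨F, hF, hf0⟩ := h0
  have hfn : f n = copyFact g F := by rw [← hf0, ← h.fact_periodic 0, zero_add]
  have hex : ∃ r, 0 < r ∧ ∃ F ∈ I, f r = copyFact g F := ⟨n, hn, F, hF, hfn⟩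
  obtain ⟨hr, F', -, hfr⟩ := Nat.find_spec hex
  have hrn : Nat.find hex ≤ n := Nat.find_min' hex ⟨hn, F, hF, hfn⟩
  set r := Nat.find hex
  have hx0 := h.mem_left 0
  have hxr := h.mem_right (r - 1)
  rw [hf0] at hx0
  rw [Nat.sub_add_cancel hr, hfr] at hxr
  rcases Nat.eq_or_lt_of_le hr with hr1 | hr1
  · apply h.fact_ne_succ 0
    rw [hf0, show 0 + 1 = r from hr1, hfr, eq_of_mem_copyFact_args hx0 (hr1 ▸ hxr)]
  · have hpath : ∀ j, 0 < j → j ≤ r - 1 → ∃ a t, f j = pathFact a t := by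
      intro j hj hjr
      rcases mem_highGirthInst.1 (h.mem j) with ⟨G, hG, hGj⟩ | ⟨a, -, t, -, hj'⟩
      · exact absurd ⟨hj, G, hG, hGj.symm⟩ (Nat.find_min hex (by omega))
      · exact ⟨a, t, hj'.symm⟩
    have hd0 := dvd_unpair_snd_of_mem_copyFact_args hx0
    have hdr := dvd_unpair_snd_of_mem_copyFact_args hxr
    have hdvd : g + 1 ∣ r - 1 := by
      rcases h.eq_add_or_eq_add_of_pathFact hpath with hd | hd
      · exact (Nat.dvd_add_right hd0).1 (hd ▸ hdr)
      · exact (Nat.dvd_add_right hdr).1 (hd ▸ hd0)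
    have := Nat.le_of_dvd (by omega) hdvd
    omega

lemma girthGT_highGirthInst (I : Inst) (g : ℕ) : GirthGT (highGirthInst I g) g := by
  intro n hng hcyc
  have hn : 0 < n := hcyc.1
  obtain ⟨f, x, h⟩ := hcyc.exists_isCyclicTrail fun _ => nodup_args_of_mem_highGirthInst
  by_cases hcopy : ∃ k, ∃ F ∈ I, f k = copyFact g F
  · obtain ⟨k, hk⟩ := hcopy
    exact (h.shift k).false_of_copyFact hn hng (by simpa using hk)
  · have hpath : ∀ j, ∃ a t, f j = pathFact a t := fun j => by
      rcases mem_highGirthInst.1 (h.mem j) with ⟨F, hF, hFj⟩ | ⟨a, -, t, -, hj⟩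
      · exact absurd ⟨j, F, hF, hFj.symm⟩ hcopy
      · exact ⟨a, t, hj.symm⟩
    have hd := h.eq_add_or_eq_add_of_pathFact (m := n) fun j _ _ => hpath j
    rw [show x n = x 0 by simpa using h.periodic 0] at hd
    omega

end Girth

end DDLogPaper

/-- Lem. 6.2: for every instance over a schema with `eq` and every `g`,
there is an instance of girth exceeding `g` that maps to exactly the same templates with
equality. -/
theorem statement_10 (SE : Schema) (heq : HasEqualitySchema SE)
    (I : Inst) (hI : SE.IsInstance I) (g : ℕ) :
    ∃ Ig : Inst, SE.IsInstance Ig ∧ GirthGT Ig g ∧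
      ∀ T : Inst, SE.IsInstance T → TemplateHasEquality T →
        (HomTo Ig T ↔ HomTo I T) :=
  ⟨highGirthInst I g, isInstance_highGirthInst heq hI g, girthGT_highGirthInst I g,
    fun _ _ hT => ⟨homTo_of_homTo_highGirthInst hT g, homTo_highGirthInst hT g⟩⟩
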